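/- arXiv:1802.00578 — 3 statements merged into one kernel-verified Lean document; each statement's English description precedes it below -/
import Mathlib

section
/- For a random variable X following the falling factorial distribution with parameter (n, θ), the variance of X equals θ·ℓ_n(θ) where ℓ_n(θ) = Σ_{i=1}^n (i-1)/(θ+i-1)^2. -/
/-!
Writing `p n x` for `ffPMF n θ x`, the factorisation `(θ)_{n+1} = (θ)_n (θ + n)` gives
`p (n+1) (x+1) = (θ p n x + n p n (x+1)) / (θ + n)`: the law at `n + 1` is that of `X + B` with
`X` of law `p n` and `B` an independent Bernoulli variable of parameter `q = θ / (θ + n)`.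
So every step adds `q (1 - q) = θ n / (θ + n) ^ 2` to the variance, which is the increment of
`θ * ellFn n θ`.

`X` is not assumed measurable; since its fibres have total mass `1`, they are null-measurable,
which is enough to pass to the law of `X` on `ℕ`.
-/

open MeasureTheory ProbabilityTheory Finset

noncomputable def ellFn (m : ℕ) (θ : ℝ) : ℝ := ∑ i ∈ Finset.Icc 1 m, ((i : ℝ) - 1) / (θ + i - 1) ^ 2
noncomputable def Lfn (m : ℕ) (θ : ℝ) : ℝ := ∑ i ∈ Finset.Icc 1 m, 1 / (θ + i - 1)
noncomputable def ffPMF (n : ℕ) (θ : ℝ) (x : ℕ) : ℝ :=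
  ((ascPochhammer ℕ n).coeff x : ℝ) * θ ^ x / (ascPochhammer ℝ n).eval θ

open Polynomial

section NullMeasurable

variable {Ω : Type*} [MeasurableSpace Ω] {μ : Measure Ω} [IsFiniteMeasure μ]

-- The measurable hulls of `s` and `sᶜ` cover the space and so overlap in a null set.
lemma nullMeasurableSet_of_measure_add_measure_compl_le {s : Set Ω}
    (h : μ s + μ sᶜ ≤ μ Set.univ) : NullMeasurableSet s μ := by
  set T := toMeasurable μ s
  set T' := toMeasurable μ sᶜ
  have hcover : T ∪ T' = Set.univ :=
    Set.eq_univ_of_univ_subset <| Set.union_compl_self s ▸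
      Set.union_subset_union (subset_toMeasurable μ s) (subset_toMeasurable μ sᶜ)
  have hoverlap : μ (T ∩ T') = 0 := by
    have := measure_union_add_inter (μ := μ) T (measurableSet_toMeasurable μ sᶜ)
    rw [measure_toMeasurable, measure_toMeasurable, hcover] at this
    exact nonpos_iff_eq_zero.mp <|
      ENNReal.le_of_add_le_add_left (measure_ne_top μ _) (by rwa [this, add_zero])
  have hae : s =ᵐ[μ] T := by
    refine ae_eq_set.mpr ⟨by rw [Set.sdiff_eq_empty.mpr (subset_toMeasurable μ s), measure_empty],
      measure_mono_null (show T \ s ⊆ T ∩ T' from fun ω hω =>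
        ⟨hω.1, subset_toMeasurable μ sᶜ hω.2⟩) hoverlap⟩
  exact (measurableSet_toMeasurable μ s).nullMeasurableSet.congr hae.symm

lemma aemeasurable_of_tsum_measure_preimage_singleton_le {α : Type*} [Countable α]
    [MeasurableSpace α] {X : Ω → α}
    (h : ∑' a, μ (X ⁻¹' {a}) ≤ μ Set.univ) : AEMeasurable X μ := by
  have hfiber (a : α) : NullMeasurableSet (X ⁻¹' {a}) μ := by
    refine nullMeasurableSet_of_measure_add_measure_compl_le (le_trans ?_ h)
    have hcompl : (X ⁻¹' {a})ᶜ ⊆ ⋃ b ∈ ((({a} : Finset α) : Set α)ᶜ), X ⁻¹' {b} := by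
      intro ω hω
      simpa using hω
    calc μ (X ⁻¹' {a}) + μ (X ⁻¹' {a})ᶜ
        ≤ ∑ b ∈ {a}, μ (X ⁻¹' {b})
            + ∑' b : ↥((({a} : Finset α) : Set α)ᶜ), μ (X ⁻¹' {(b : α)}) := by
          rw [Finset.sum_singleton]
          gcongr
          exact (measure_mono hcompl).trans (measure_biUnion_le μ (Set.to_countable _) _)
      _ = ∑' b, μ (X ⁻¹' {b}) := ENNReal.sum_add_tsum_compl _ _
  refine NullMeasurable.aemeasurable fun s _ => ?_
  rw [← Set.biUnion_of_singleton s, Set.preimage_iUnion₂]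
  exact .biUnion (Set.to_countable s) fun a _ => hfiber a

end NullMeasurable

lemma integral_eq_sum_of_measure_singleton {ν : Measure ℕ} [IsFiniteMeasure ν] {p : ℕ → ℝ}
    (hp : 0 ≤ p) {N : ℕ} (hpN : ∀ x, N ≤ x → p x = 0) (hν : ∀ x, ν {x} = ENNReal.ofReal (p x))
    (g : ℕ → ℝ) : ∫ x, g x ∂ν = ∑ x ∈ range N, p x * g x := by
  have hsupp : ∀ᵐ x ∂ν, x ∈ (range N : Set ℕ) := by
    refine measure_mono_null (t := ⋃ x ∈ Set.Ici N, {x}) (fun x hx => by simp_all)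
      ((measure_biUnion_null_iff (Set.to_countable _)).mpr fun x hx => ?_)
    rw [hν, hpN x hx, ENNReal.ofReal_zero]
  rw [← Measure.restrict_eq_self_of_ae_mem hsupp, setIntegral_finset _ IntegrableOn.finset]
  refine sum_congr rfl fun x _ => ?_
  rw [measureReal_def, hν, ENNReal.toReal_ofReal (hp x), smul_eq_mul]

lemma ascPochhammer_coeff_succ_succ {S : Type*} [Semiring S] (n x : ℕ) :
    (ascPochhammer S (n + 1)).coeff (x + 1)
      = (ascPochhammer S n).coeff x + n * (ascPochhammer S n).coeff (x + 1) := by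
  rw [ascPochhammer_succ_right, mul_add, coeff_add, coeff_mul_X, ← C_eq_natCast, coeff_mul_C,
    Nat.cast_comm]

lemma ascPochhammer_coeff_succ_zero {S : Type*} [Semiring S] (n : ℕ) :
    (ascPochhammer S (n + 1)).coeff 0 = n * (ascPochhammer S n).coeff 0 := by
  rw [ascPochhammer_succ_right, mul_add, coeff_add, coeff_mul_X_zero, ← C_eq_natCast, coeff_mul_C,
    zero_add, Nat.cast_comm]

lemma ffPMF_succ_succ (n : ℕ) (θ : ℝ) (x : ℕ) :
    ffPMF (n + 1) θ (x + 1) = (θ * ffPMF n θ x + n * ffPMF n θ (x + 1)) / (θ + n) := by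
  simp only [ffPMF, ascPochhammer_coeff_succ_succ, ascPochhammer_succ_eval, ← div_div]
  push_cast
  ring

lemma ffPMF_succ_zero (n : ℕ) (θ : ℝ) : ffPMF (n + 1) θ 0 = n * ffPMF n θ 0 / (θ + n) := by
  simp only [ffPMF, ascPochhammer_coeff_succ_zero, ascPochhammer_succ_eval, ← div_div]
  push_cast
  ring

lemma ffPMF_eq_zero_of_lt {n x : ℕ} (θ : ℝ) (hx : n < x) : ffPMF n θ x = 0 := by
  rw [ffPMF, coeff_eq_zero_of_natDegree_lt (by rwa [ascPochhammer_natDegree]), Nat.cast_zero,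
    zero_mul, zero_div]

lemma ffPMF_nonneg (n : ℕ) {θ : ℝ} (hθ : 0 < θ) (x : ℕ) : 0 ≤ ffPMF n θ x := by
  have := ascPochhammer_pos n θ hθ
  unfold ffPMF
  positivity

noncomputable def ffExpect (n : ℕ) (θ : ℝ) (g : ℕ → ℝ) : ℝ :=
  ∑ x ∈ range (n + 1), ffPMF n θ x * g x

lemma ffExpect_zero (θ : ℝ) (g : ℕ → ℝ) : ffExpect 0 θ g = g 0 := by
  simp [ffExpect, ffPMF]

lemma ffExpect_succ (n : ℕ) (θ : ℝ) (g : ℕ → ℝ) :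
    ffExpect (n + 1) θ g
      = (θ * ffExpect n θ (fun x => g (x + 1)) + n * ffExpect n θ g) / (θ + n) := by
  have hpad : ffExpect n θ g = ∑ x ∈ range (n + 2), ffPMF n θ x * g x := by
    rw [ffExpect, sum_range_succ _ (n + 1), ffPMF_eq_zero_of_lt θ n.lt_succ_self, zero_mul,
      add_zero]
  rw [hpad, ffExpect, ffExpect, sum_range_succ', sum_range_succ' _ (n + 1)]
  simp only [ffPMF_succ_succ, ffPMF_succ_zero, div_mul_eq_mul_div, ← sum_div, ← add_div]
  congr 1
  simp only [add_mul, mul_add, sum_add_distrib, mul_sum, mul_assoc]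
  ring

lemma ellFn_succ (n : ℕ) (θ : ℝ) : ellFn (n + 1) θ = ellFn n θ + n / (θ + n) ^ 2 := by
  rw [ellFn, ellFn, sum_Icc_succ_top (by omega)]
  push_cast
  ring

lemma ffExpect_sub_sq (n : ℕ) (θ c : ℝ) :
    ffExpect n θ (fun x => ((x : ℝ) - c) ^ 2) = ffExpect n θ (fun x => (x : ℝ) ^ 2)
      - 2 * c * ffExpect n θ (fun x => (x : ℝ)) + c ^ 2 * ffExpect n θ (fun _ => 1) := by
  simp only [ffExpect, mul_sum, ← sum_sub_distrib, ← sum_add_distrib]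
  exact sum_congr rfl fun x _ => by ring

lemma ffExpect_one {θ : ℝ} (hθ : 0 < θ) (n : ℕ) : ffExpect n θ (fun _ => 1) = 1 := by
  induction n with
  | zero => exact ffExpect_zero θ _
  | succ n ih =>
    have : θ + n ≠ 0 := by positivity
    rw [ffExpect_succ, ih]
    field_simp

lemma ffExpect_sq_sub_sq {θ : ℝ} (hθ : 0 < θ) (n : ℕ) :
    ffExpect n θ (fun x => (x : ℝ) ^ 2) - ffExpect n θ (fun x => (x : ℝ)) ^ 2 = θ * ellFn n θ := by
  induction n with
  | zero => simp [ffExpect_zero, ellFn]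
  | succ n ih =>
    have hshift :
        ffExpect n θ (fun x => ((x + 1 : ℕ) : ℝ)) = ffExpect n θ (fun x => (x : ℝ)) + 1 := by
      rw [← ffExpect_one hθ n]
      simp only [ffExpect, ← sum_add_distrib]
      exact sum_congr rfl fun x _ => by push_cast; ring
    have hshift_sq : ffExpect n θ (fun x => ((x + 1 : ℕ) : ℝ) ^ 2)
        = ffExpect n θ (fun x => (x : ℝ) ^ 2) + 2 * ffExpect n θ (fun x => (x : ℝ)) + 1 := by
      rw [← ffExpect_one hθ n]
      simp only [ffExpect, mul_sum, ← sum_add_distrib]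
      exact sum_congr rfl fun x _ => by push_cast; ring
    have : θ + n ≠ 0 := by positivity
    rw [ffExpect_succ, ffExpect_succ, hshift, hshift_sq, ellFn_succ, mul_add θ (ellFn n θ), ← ih]
    field_simp
    ring

lemma ffExpect_sub_mean_sq {θ : ℝ} (hθ : 0 < θ) (n : ℕ) :
    ffExpect n θ (fun x => ((x : ℝ) - ffExpect n θ (fun y => (y : ℝ))) ^ 2) = θ * ellFn n θ := by
  rw [ffExpect_sub_sq, ffExpect_one hθ, ← ffExpect_sq_sub_sq hθ]
  ring

lemma tsum_ofReal_ffPMF (n : ℕ) {θ : ℝ} (hθ : 0 < θ) :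
    ∑' x, ENNReal.ofReal (ffPMF n θ x) = 1 := by
  rw [tsum_eq_sum (s := range (n + 1)) fun x hx => by
      rw [ffPMF_eq_zero_of_lt θ (by simpa using hx), ENNReal.ofReal_zero],
    ← ENNReal.ofReal_sum_of_nonneg fun x _ => ffPMF_nonneg n hθ x]
  simpa [ffExpect] using congrArg ENNReal.ofReal (ffExpect_one hθ n)

theorem ff_variance_general (Ω : Type*) [MeasurableSpace Ω] (μ : Measure Ω) [IsProbabilityMeasure μ]
    (X : Ω → ℕ) (n : ℕ) (θ : ℝ) (hθ : 0 < θ)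
    (hX : ∀ x : ℕ, μ {ω | X ω = x} = ENNReal.ofReal (ffPMF n θ x)) :
    variance (fun ω => (X ω : ℝ)) μ = θ * ellFn n θ := by
  have hXmeas : AEMeasurable X μ := aemeasurable_of_tsum_measure_preimage_singleton_le <| by
    simp_rw [Set.preimage, Set.mem_singleton_iff, hX, tsum_ofReal_ffPMF n hθ, measure_univ, le_rfl]
  have hlaw (x : ℕ) : μ.map X {x} = ENNReal.ofReal (ffPMF n θ x) := by
    rw [Measure.map_apply_of_aemeasurable hXmeas (measurableSet_singleton x)]
    exact hX x
  have hexpect (g : ℕ → ℝ) : ∫ x, g x ∂μ.map X = ffExpect n θ g :=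
    integral_eq_sum_of_measure_singleton (ffPMF_nonneg n hθ) (fun x hx => ffPMF_eq_zero_of_lt θ hx)
      hlaw g
  have := Measure.isProbabilityMeasure_map hXmeas
  rw [← Function.comp_def (fun x : ℕ => (x : ℝ)) X,
    ← variance_map Measurable.of_discrete.aemeasurable hXmeas,
    variance_eq_integral Measurable.of_discrete.aemeasurable, hexpect, hexpect]
  exact ffExpect_sub_mean_sq hθ n

theorem ff_variance (Ω : Type*) [MeasurableSpace Ω] (μ : Measure Ω) [IsProbabilityMeasure μ]
    (X : Ω → ℕ) (n : ℕ) (θ : ℝ) (hn : 1 ≤ n) (hθ : 0 < θ)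
    (hX : ∀ x : ℕ, μ {ω | X ω = x} = ENNReal.ofReal (ffPMF n θ x)) :
    variance (fun ω => (X ω : ℝ)) μ = θ * ellFn n θ :=
  ff_variance_general Ω μ X n θ hθ hX
end

section
/- Let 0 < θ < 2 be real, s ≥ 2 an integer, and n an integer with n > 1 + (θ+1)^2(1/s + 1). Then s·ℓ_n(θ) > ℓ_{ns}(θ). -/
open MeasureTheory ProbabilityTheory Finset

/-!
Write `ℓ_m(θ) = ∑_{i < m} g(i)` with `g(x) = x / (θ + x)²`. It suffices to show
`ℓ_{K+n} < ℓ_K + ℓ_n` for `K ≥ n`, i.e. that the block `g(K), …, g(K+n-1)` sums to less than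
`g(0), …, g(n-1)`; induction on `s` then gives `ℓ_{ns} < s ℓ_n`. Since `g` decreases on `[θ, ∞)`,
`g(K+j) ≤ g(j+1)` for `2 ≤ j ≤ n-2`. The three remaining terms `g(K), g(K+1), g(K+n-1)` are each
below `1/(θ+x)`, hence small once `n > 1 + (θ+1)²`, and together they stay below `g(1) + g(2)`
(recall `g(0) = 0`).
-/

noncomputable def ellTerm (θ x : ℝ) : ℝ := x / (θ + x) ^ 2

lemma ellFn_eq_sum_range (m : ℕ) (θ : ℝ) : ellFn m θ = ∑ i ∈ range m, ellTerm θ i := by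
  induction m with
  | zero => simp [ellFn]
  | succ m ih =>
    rw [ellFn, sum_Icc_succ_top (by omega), ← ellFn, ih, sum_range_succ, ellTerm]
    push_cast
    ring_nf

lemma ellTerm_lt_inv {θ x : ℝ} (hθ : 0 < θ) (hx : 0 ≤ x) : ellTerm θ x < (θ + x)⁻¹ := by
  have hpos : 0 < θ + x := by linarith
  rw [ellTerm, div_lt_iff₀ (by positivity), pow_two, ← mul_assoc, inv_mul_cancel₀ hpos.ne']
  linarith

lemma ellTerm_antitoneOn {θ : ℝ} (hθ : 0 < θ) : AntitoneOn (ellTerm θ) (Set.Ici θ) := by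
  intro a (ha : θ ≤ a) b (hb : θ ≤ b) hab
  have hpa : 0 < θ + a := by linarith
  have hpb : 0 < θ + b := by linarith
  rw [ellTerm, ellTerm, div_le_div_iff₀ (pow_pos hpb 2) (pow_pos hpa 2)]
  -- the difference of the two sides is `(b - a) * (θ ^ 2 - a * b)`
  nlinarith [mul_nonneg (sub_nonneg.2 hab) (sub_nonneg.2 (mul_le_mul ha hb hθ.le (by linarith)))]

lemma ellTerm_add_ellTerm_add_ellTerm_lt {θ N K : ℝ} (hθ : 0 < θ) (hN : 1 + (θ + 1) ^ 2 < N)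
    (hK : N ≤ K) :
    ellTerm θ K + ellTerm θ (K + 1) + ellTerm θ (K + N - 1) < ellTerm θ 1 + ellTerm θ 2 := by
  set u := θ + 1 with hu
  have hu1 : 1 < u := by linarith
  have h₁ : ellTerm θ K < (u + u ^ 2)⁻¹ :=
    (ellTerm_lt_inv hθ (by nlinarith)).trans_le (inv_anti₀ (by positivity) (by linarith))
  have h₂ : ellTerm θ (K + 1) < (u + u ^ 2)⁻¹ :=
    (ellTerm_lt_inv hθ (by nlinarith)).trans_le (inv_anti₀ (by positivity) (by linarith))
  have h₃ : ellTerm θ (K + N - 1) < (u + 2 * u ^ 2)⁻¹ :=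
    (ellTerm_lt_inv hθ (by nlinarith)).trans_le (inv_anti₀ (by positivity) (by linarith))
  have key : 2 * (u + u ^ 2)⁻¹ + (u + 2 * u ^ 2)⁻¹ ≤ 1 / u ^ 2 + 2 / (u + 1) ^ 2 := by
    have hdiff : 1 / u ^ 2 + 2 / (u + 1) ^ 2 - (2 * (u + u ^ 2)⁻¹ + (u + 2 * u ^ 2)⁻¹)
        = (u ^ 3 - u ^ 2 + u + 1) / (u ^ 2 * (u + 1) ^ 2 * (2 * u + 1)) := by
      field_simp
      ring
    have : 0 ≤ (u ^ 3 - u ^ 2 + u + 1) / (u ^ 2 * (u + 1) ^ 2 * (2 * u + 1)) :=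
      div_nonneg (by nlinarith) (by positivity)
    linarith
  have hg12 : ellTerm θ 1 + ellTerm θ 2 = 1 / u ^ 2 + 2 / (u + 1) ^ 2 := by
    simp only [ellTerm, hu]
    ring
  linarith

lemma sum_range_ellTerm_add_lt {θ : ℝ} (hθ0 : 0 < θ) (hθ : θ ≤ 3) {n K : ℕ}
    (hn : 1 + (θ + 1) ^ 2 < (n : ℝ)) (hK : n ≤ K) :
    ∑ j ∈ range n, ellTerm θ ↑(K + j) < ∑ j ∈ range n, ellTerm θ j := by
  obtain ⟨m, rfl⟩ : ∃ m, n = m + 3 := ⟨n - 3, by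
    have : (2 : ℝ) < n := by nlinarith
    have : 2 < n := by exact_mod_cast this
    omega⟩
  have hK' : (m + 3 : ℝ) ≤ K := by exact_mod_cast hK
  have hmid : ∑ j ∈ range m, ellTerm θ (K + (j + 1 + 1)) ≤ ∑ j ∈ range m, ellTerm θ (j + 1 + 1 + 1) :=
    sum_le_sum fun j _ => by
      have hj : (0 : ℝ) ≤ j := j.cast_nonneg
      exact ellTerm_antitoneOn hθ0 (by simp only [Set.mem_Ici]; linarith)
        (by simp only [Set.mem_Ici]; linarith) (by linarith)
  have hends := ellTerm_add_ellTerm_add_ellTerm_lt hθ0 (by exact_mod_cast hn)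
    (by exact_mod_cast hK : ((m + 3 : ℕ) : ℝ) ≤ K)
  rw [sum_range_succ, sum_range_succ', sum_range_succ']
  rw [sum_range_succ', sum_range_succ', sum_range_succ']
  push_cast at hmid hends ⊢
  rw [show (K : ℝ) + (m + 3) - 1 = K + (m + 2) by ring] at hends
  rw [add_zero, show ellTerm θ 0 = 0 by simp [ellTerm]]
  linarith

lemma ellFn_add_lt {θ : ℝ} (hθ0 : 0 < θ) (hθ : θ ≤ 3) {n K : ℕ}
    (hn : 1 + (θ + 1) ^ 2 < (n : ℝ)) (hK : n ≤ K) :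
    ellFn (K + n) θ < ellFn K θ + ellFn n θ := by
  rw [ellFn_eq_sum_range, ellFn_eq_sum_range, ellFn_eq_sum_range, sum_range_add]
  linarith [sum_range_ellTerm_add_lt hθ0 hθ hn hK]

lemma ellFn_mul_lt {θ : ℝ} (hθ0 : 0 < θ) (hθ : θ ≤ 3) {n : ℕ}
    (hn : 1 + (θ + 1) ^ 2 < (n : ℝ)) {s : ℕ} (hs : 2 ≤ s) :
    ellFn (n * s) θ < s * ellFn n θ := by
  induction s, hs using Nat.le_induction with
  | base =>
    rw [mul_two, Nat.cast_two, two_mul]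
    exact ellFn_add_lt hθ0 hθ hn le_rfl
  | succ s hs ih =>
    calc ellFn (n * (s + 1)) θ = ellFn (n * s + n) θ := by rw [mul_add_one]
    _ < ellFn (n * s) θ + ellFn n θ := ellFn_add_lt hθ0 hθ hn (Nat.le_mul_of_pos_right n (by omega))
    _ < s * ellFn n θ + ellFn n θ := by gcongr
    _ = ((s + 1 : ℕ) : ℝ) * ellFn n θ := by push_cast; ring

theorem th0_part2 (θ : ℝ) (hθ0 : 0 < θ) (hθ : θ < 2) (s n : ℕ) (hs : 2 ≤ s)
    (hn : (n : ℝ) > 1 + (θ + 1) ^ 2 * (1 / s + 1)) :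
    s * ellFn n θ > ellFn (n * s) θ := by
  have hn' : 1 + (θ + 1) ^ 2 < (n : ℝ) := by
    have : 0 ≤ (θ + 1) ^ 2 * (1 / s) := by positivity
    linarith
  exact ellFn_mul_lt hθ0 (by linarith) hn' hs
end

section
/- For real θ > 0 and positive integer n, L_n(θ) = Σ_{i=1}^n 1/(θ+i-1) < log(1 + n/θ) + n/(θ(θ+n)). -/
open MeasureTheory ProbabilityTheory Finset

/-! Each term satisfies `1/(θ+i) < g(i+1) - g(i)` for `g(i) = log(θ+i) - 1/(θ+i)`, which is the
strict inequality `1/(x+1) < log(x+1) - log x`; summing telescopes to the bound. -/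

lemma one_div_add_one_lt_log_sub_log {x : ℝ} (hx : 0 < x) :
    1 / (x + 1) < Real.log (x + 1) - Real.log x := by
  have hx1 : 0 < x + 1 := by linarith
  have hlt := Real.log_lt_sub_one_of_pos (div_pos hx hx1) (by intro h; field_simp at h; linarith)
  rw [Real.log_div hx.ne' hx1.ne'] at hlt
  have : x / (x + 1) - 1 = -(1 / (x + 1)) := by field_simp; ring
  linarith

lemma Lfn_eq_sum_range (m : ℕ) (θ : ℝ) : Lfn m θ = ∑ i ∈ range m, 1 / (θ + i) := by
  rw [Lfn, ← Ico_add_one_right_eq_Icc, sum_Ico_eq_sum_range]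
  simp only [Nat.add_sub_cancel, Nat.cast_add, Nat.cast_one]
  refine sum_congr rfl fun i _ => ?_
  ring_nf

lemma sum_range_one_div_add_lt {θ : ℝ} (hθ : 0 < θ) {n : ℕ} (hn : n ≠ 0) :
    ∑ i ∈ range n, 1 / (θ + i) < Real.log (θ + n) - Real.log θ + (1 / θ - 1 / (θ + n)) := by
  set g : ℕ → ℝ := fun i => Real.log (θ + i) - 1 / (θ + i)
  have hstep : ∀ i ∈ range n, 1 / (θ + i) < g (i + 1) - g i := by
    intro i _
    have := one_div_add_one_lt_log_sub_log (x := θ + i) (by positivity)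
    simp only [g, Nat.cast_add, Nat.cast_one, ← add_assoc]
    linarith
  calc ∑ i ∈ range n, 1 / (θ + i) < ∑ i ∈ range n, (g (i + 1) - g i) :=
        sum_lt_sum_of_nonempty (nonempty_range_iff.mpr hn) hstep
    _ = _ := by rw [sum_range_sub]; simp only [g, Nat.cast_zero, add_zero]; ring

theorem L_lt (θ : ℝ) (hθ : 0 < θ) (n : ℕ) (hn : 1 ≤ n) :
    Lfn n θ < Real.log (1 + n / θ) + n / (θ * (θ + n)) := by
  have hθn : 0 < θ + n := by positivity
  have hlog : Real.log (1 + n / θ) = Real.log (θ + n) - Real.log θ := by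
    rw [← Real.log_div hθn.ne' hθ.ne']
    congr 1
    field_simp
  have hfrac : (n : ℝ) / (θ * (θ + n)) = 1 / θ - 1 / (θ + n) := by
    field_simp
    ring
  rw [Lfn_eq_sum_range, hlog, hfrac]
  exact sum_range_one_div_add_lt hθ (by omega)
end
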